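/- arXiv:1302.4850 — 2 statements merged into one kernel-verified Lean document; each statement's English description precedes it below -/
import Mathlib

section
/- For every n ∈ ℤ, ∫_{‖x‖ ≤ p^n} log‖x‖ dμ(x) = (n - 1/(p - 1)) · p^n · log p. -/
/-!
Write `B n` for the closed ball of radius `p ^ n` about `0`. It is the disjoint union of the `p`
balls `B (n - 1)` centred at `j * p ^ (-n)`, `0 ≤ j < p`, so `μ (B n) = p ^ n * μ (B 0)`.
For `0 < ‖x‖ ≤ p ^ n`, the number `n * log p - log ‖x‖` is `log p` times the number of balls
`B (n - k - 1)`, `k : ℕ`, containing `x`. Integrating this count over `B n` by monotone convergence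
gives `log p * ∑ₖ p ^ (n - k - 1) = p ^ n * log p / (p - 1)`, which shows at once that `log ‖x‖` is
integrable on `B n` and computes its integral.
-/

open MeasureTheory Metric Set Pointwise

lemma hasSum_zpow_sub_add_one {a : ℝ} (ha : 1 < a) (n : ℤ) :
    HasSum (fun k : ℕ => a ^ (n - (k + 1))) (a ^ n / (a - 1)) := by
  have ha0 : a ≠ 0 := by positivity
  have hterm (k : ℕ) : a ^ (n - (k + 1)) = a ^ (n - 1) * a⁻¹ ^ k := by
    rw [inv_pow, ← zpow_natCast, ← zpow_neg, ← zpow_add₀ ha0]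
    ring_nf
  have hsum : a ^ n / (a - 1) = a ^ (n - 1) * (1 - a⁻¹)⁻¹ := by
    rw [zpow_sub_one₀ ha0]
    field_simp
  simp only [hterm, hsum]
  exact (hasSum_geometric_of_lt_one (by positivity) (inv_lt_one_of_one_lt₀ ha)).mul_left _

namespace Padic

variable {p : ℕ} [hp : Fact p.Prime]

lemma ball_zpow_add_one (x : ℚ_[p]) (k : ℤ) :
    ball x ((p : ℝ) ^ (k + 1)) = closedBall x ((p : ℝ) ^ k) := by
  ext y
  rw [mem_ball, mem_closedBall, dist_eq_norm, norm_le_pow_iff_norm_lt_pow_add_one]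

lemma closedBall_zero_one_eq_iUnion_ball :
    closedBall (0 : ℚ_[p]) 1 = ⋃ j : Fin p, ball (j : ℚ_[p]) 1 := by
  ext y
  simp only [mem_closedBall_zero_iff, mem_iUnion, mem_ball, dist_eq_norm]
  constructor
  · intro hy
    obtain ⟨n, hnp, hn⟩ := PadicInt.exists_mem_range ⟨y, hy⟩
    exact ⟨⟨n, hnp⟩, PadicInt.mem_nonunits.mp hn⟩
  · rintro ⟨j, hj⟩
    calc ‖y‖ = ‖(y - j) + (j : ℤ)‖ := by push_cast; rw [sub_add_cancel]
      _ ≤ max ‖y - j‖ ‖((j : ℤ) : ℚ_[p])‖ := nonarchimedean _ _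
      _ ≤ 1 := max_le hj.le (norm_int_le_one _)

lemma pairwise_disjoint_ball_natCast :
    Pairwise (Function.onFun Disjoint fun j : Fin p => ball (j : ℚ_[p]) 1) := by
  intro i j hij
  refine (IsUltrametricDist.ball_eq_or_disjoint _ _ _).resolve_left fun h => hij ?_
  have hi : (i : ℚ_[p]) ∈ ball (j : ℚ_[p]) 1 := h ▸ mem_ball_self one_pos
  rw [mem_ball, dist_eq_norm, show (i : ℚ_[p]) - j = ((i - j : ℤ) : ℚ_[p]) by push_cast; rfl,
    norm_intCast_lt_one_iff] at hi
  have := Int.eq_zero_of_abs_lt_dvd hi (abs_sub_lt_iff.mpr (by omega))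
  omega

lemma closedBall_zero_norm_eq_iUnion_ball {c : ℚ_[p]} (hc : c ≠ 0) :
    closedBall (0 : ℚ_[p]) ‖c‖ = ⋃ j : Fin p, ball (c * j) ‖c‖ := by
  have := congrArg (c • ·) (closedBall_zero_one_eq_iUnion_ball (p := p))
  simpa only [smul_closedBall' hc, smul_set_iUnion, _root_.smul_ball hc, smul_eq_mul, mul_zero,
    mul_one] using this

lemma pairwise_disjoint_ball_mul_natCast {c : ℚ_[p]} (hc : c ≠ 0) :
    Pairwise (Function.onFun Disjoint fun j : Fin p => ball (c * j) ‖c‖) := by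
  intro i j hij
  have := (pairwise_disjoint_ball_natCast hij).preimage (c⁻¹ • ·)
  rwa [preimage_smul_inv₀ hc, preimage_smul_inv₀ hc, _root_.smul_ball hc, _root_.smul_ball hc,
    smul_eq_mul, smul_eq_mul, mul_one] at this

lemma ofReal_sub_log_norm_eq_tsum_indicator {x : ℚ_[p]} (hx : x ≠ 0) {n : ℤ}
    (hxn : ‖x‖ ≤ (p : ℝ) ^ n) :
    ENNReal.ofReal (n * Real.log p - Real.log ‖x‖) =
      ∑' k : ℕ, (closedBall (0 : ℚ_[p]) ((p : ℝ) ^ (n - (k + 1)))).indicator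
        (fun _ => ENNReal.ofReal (Real.log p)) x := by
  have hp1 : (1 : ℝ) < p := by exact_mod_cast hp.out.one_lt
  rw [norm_eq_zpow_neg_valuation hx, zpow_le_zpow_iff_right₀ hp1] at hxn
  obtain ⟨m, hm⟩ : ∃ m : ℕ, n + x.valuation = m := ⟨(n + x.valuation).toNat, by omega⟩
  have hmem (k : ℕ) : x ∈ closedBall (0 : ℚ_[p]) ((p : ℝ) ^ (n - (k + 1))) ↔ k < m := by
    rw [mem_closedBall_zero_iff, norm_eq_zpow_neg_valuation hx, zpow_le_zpow_iff_right₀ hp1]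
    omega
  have hlog : n * Real.log p - Real.log ‖x‖ = m * Real.log p := by
    have hm' : (m : ℝ) = n + x.valuation := by exact_mod_cast hm.symm
    rw [norm_eq_zpow_neg_valuation hx, Real.log_zpow, hm']
    push_cast
    ring
  simp only [indicator, hmem]
  rw [tsum_eq_sum (s := Finset.range m) (by simp +contextual),
    Finset.sum_ite_of_true fun k hk => Finset.mem_range.mp hk, hlog,
    ENNReal.ofReal_mul m.cast_nonneg, ENNReal.ofReal_natCast, Finset.sum_const,
    Finset.card_range, nsmul_eq_mul]

section Haar

variable [MeasurableSpace ℚ_[p]] [BorelSpace ℚ_[p]] (μ : Measure ℚ_[p]) [μ.IsAddHaarMeasure]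

lemma addHaar_closedBall_zpow_add_one (k : ℤ) :
    μ (closedBall 0 ((p : ℝ) ^ (k + 1))) = p * μ (closedBall 0 ((p : ℝ) ^ k)) := by
  set c : ℚ_[p] := (p : ℚ_[p]) ^ (-(k + 1))
  have hc : c ≠ 0 := zpow_ne_zero _ (by exact_mod_cast hp.out.ne_zero)
  have hnorm : ‖c‖ = (p : ℝ) ^ (k + 1) := by rw [norm_p_zpow, neg_neg]
  rw [← hnorm, closedBall_zero_norm_eq_iUnion_ball hc,
    measure_iUnion (pairwise_disjoint_ball_mul_natCast hc) fun _ => measurableSet_ball]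
  simp [hnorm, ball_zpow_add_one, Measure.addHaar_closedBall_center]

lemma addHaar_closedBall_zpow (k : ℤ) :
    μ (closedBall 0 ((p : ℝ) ^ k)) = ENNReal.ofReal ((p : ℝ) ^ k) * μ (closedBall 0 1) := by
  have hstep (m : ℤ) :
      ENNReal.ofReal ((p : ℝ) ^ (m + 1)) = p * ENNReal.ofReal ((p : ℝ) ^ m) := by
    rw [zpow_add_one₀ (by exact_mod_cast hp.out.ne_zero), ENNReal.ofReal_mul (by positivity),
      ENNReal.ofReal_natCast, mul_comm]
  induction k using Int.induction_on with
  | zero => simp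
  | succ k ih => rw [addHaar_closedBall_zpow_add_one, ih, hstep, mul_assoc]
  | pred k ih =>
    refine (ENNReal.mul_right_inj (by exact_mod_cast hp.out.ne_zero)
      (ENNReal.natCast_ne_top p)).mp ?_
    rw [← mul_assoc, ← hstep, ← addHaar_closedBall_zpow_add_one, sub_add_cancel, ih]

lemma lintegral_closedBall_ofReal_sub_log_norm (n : ℤ) :
    ∫⁻ x in closedBall 0 ((p : ℝ) ^ n), ENNReal.ofReal (n * Real.log p - Real.log ‖x‖) ∂μ =
      ENNReal.ofReal ((p : ℝ) ^ n / (p - 1) * Real.log p) * μ (closedBall 0 1) := by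
  have hp1 : (1 : ℝ) < p := by exact_mod_cast hp.out.one_lt
  calc _ = ∫⁻ x in closedBall 0 ((p : ℝ) ^ n), ∑' k : ℕ,
          (closedBall (0 : ℚ_[p]) ((p : ℝ) ^ (n - (k + 1)))).indicator
            (fun _ => ENNReal.ofReal (Real.log p)) x ∂μ := by
        refine setLIntegral_congr_fun_ae measurableSet_closedBall ?_
        filter_upwards [Measure.ae_ne μ 0] with x hx hxn
        exact ofReal_sub_log_norm_eq_tsum_indicator hx (mem_closedBall_zero_iff.mp hxn)
    _ = ∑' k : ℕ,
          ENNReal.ofReal (Real.log p) * μ (closedBall 0 ((p : ℝ) ^ (n - (k + 1)))) := by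
        rw [lintegral_tsum fun k =>
          (measurable_const.indicator measurableSet_closedBall).aemeasurable]
        congr 1 with k
        rw [lintegral_indicator_const measurableSet_closedBall,
          Measure.restrict_apply measurableSet_closedBall, inter_eq_left.mpr
            (closedBall_subset_closedBall (zpow_le_zpow_right₀ hp1.le (by omega)))]
    _ = (∑' k : ℕ, ENNReal.ofReal ((p : ℝ) ^ (n - (k + 1)) * Real.log p)) *
          μ (closedBall 0 1) := by
        rw [← ENNReal.tsum_mul_right]
        congr 1 with k
        rw [addHaar_closedBall_zpow, ENNReal.ofReal_mul (by positivity), ← mul_assoc,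
          mul_comm (ENNReal.ofReal (Real.log p))]
    _ = _ := by
        have hsum := (hasSum_zpow_sub_add_one hp1 n).mul_right (Real.log p)
        rw [← ENNReal.ofReal_tsum_of_nonneg (fun k => by positivity) hsum.summable, hsum.tsum_eq]

lemma sub_log_norm_nonneg_ae_restrict_closedBall (n : ℤ) :
    0 ≤ᵐ[μ.restrict (closedBall 0 ((p : ℝ) ^ n))] fun x => n * Real.log p - Real.log ‖x‖ := by
  rw [Filter.EventuallyLE, ae_restrict_iff' measurableSet_closedBall]
  filter_upwards [Measure.ae_ne μ 0] with x hx hxn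
  have : Real.log ‖x‖ ≤ n * Real.log p := by
    rw [← Real.log_zpow]
    exact Real.log_le_log (norm_pos_iff.2 hx) (mem_closedBall_zero_iff.1 hxn)
  simpa using this

lemma integrableOn_sub_log_norm_closedBall (n : ℤ) :
    IntegrableOn (fun x => n * Real.log p - Real.log ‖x‖) (closedBall 0 ((p : ℝ) ^ n)) μ := by
  refine ⟨(measurable_const.sub (Real.measurable_log.comp measurable_norm)).aestronglyMeasurable,
    (hasFiniteIntegral_iff_ofReal (sub_log_norm_nonneg_ae_restrict_closedBall μ n)).2 ?_⟩
  rw [lintegral_closedBall_ofReal_sub_log_norm]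
  exact ENNReal.mul_lt_top ENNReal.ofReal_lt_top (isCompact_closedBall _ _).measure_lt_top

lemma setIntegral_closedBall_sub_log_norm (n : ℤ) :
    ∫ x in closedBall 0 ((p : ℝ) ^ n), (n * Real.log p - Real.log ‖x‖) ∂μ =
      (p : ℝ) ^ n / (p - 1) * Real.log p * μ.real (closedBall 0 1) := by
  have hp1 : (1 : ℝ) < p := by exact_mod_cast hp.out.one_lt
  rw [integral_eq_lintegral_of_nonneg_ae (sub_log_norm_nonneg_ae_restrict_closedBall μ n)
      (integrableOn_sub_log_norm_closedBall μ n).aestronglyMeasurable,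
    lintegral_closedBall_ofReal_sub_log_norm, ENNReal.toReal_mul,
    ENNReal.toReal_ofReal (by positivity), measureReal_def]

theorem setIntegral_closedBall_log_norm (n : ℤ) :
    ∫ x in closedBall 0 ((p : ℝ) ^ n), Real.log ‖x‖ ∂μ =
      (n - 1 / ((p : ℝ) - 1)) * (p : ℝ) ^ n * Real.log p * μ.real (closedBall 0 1) := by
  have hp1 : (1 : ℝ) < p := by exact_mod_cast hp.out.one_lt
  have h_const : IntegrableOn (fun _ => (n : ℝ) * Real.log p) (closedBall 0 ((p : ℝ) ^ n)) μ :=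
    integrableOn_const (isCompact_closedBall _ _).measure_lt_top.ne
  have h_ball :
      μ.real (closedBall 0 ((p : ℝ) ^ n)) = (p : ℝ) ^ n * μ.real (closedBall 0 1) := by
    rw [measureReal_def, addHaar_closedBall_zpow, ENNReal.toReal_mul,
      ENNReal.toReal_ofReal (by positivity), measureReal_def]
  calc ∫ x in closedBall 0 ((p : ℝ) ^ n), Real.log ‖x‖ ∂μ
      = ∫ x in closedBall 0 ((p : ℝ) ^ n),
          (n * Real.log p - (n * Real.log p - Real.log ‖x‖)) ∂μ := by
        simp only [sub_sub_cancel]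
    _ = _ := by
        rw [integral_sub h_const (integrableOn_sub_log_norm_closedBall μ n), setIntegral_const,
          setIntegral_closedBall_sub_log_norm, h_ball, smul_eq_mul]
        field_simp

end Haar

end Padic

theorem padic_integral_log_ball
    (p : ℕ) [Fact p.Prime]
    [MeasurableSpace ℚ_[p]] [BorelSpace ℚ_[p]]
    (μ : Measure ℚ_[p]) [μ.IsAddHaarMeasure]
    (hμ : μ {x : ℚ_[p] | ‖x‖ ≤ 1} = 1)
    (n : ℤ) :
    ∫ x in {x : ℚ_[p] | ‖x‖ ≤ (p : ℝ) ^ n}, Real.log ‖x‖ ∂μ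
      = ((n : ℝ) - 1 / ((p : ℝ) - 1)) * (p : ℝ) ^ n * Real.log p := by
  have h_ball (r : ℝ) : {x : ℚ_[p] | ‖x‖ ≤ r} = closedBall 0 r :=
    (Set.ext fun _ => mem_closedBall_zero_iff).symm
  rw [h_ball] at hμ ⊢
  rw [Padic.setIntegral_closedBall_log_norm, measureReal_def, hμ, ENNReal.toReal_one, mul_one]
end

section
/- Let n ∈ ℤ and a ∈ ℚ_p with ‖a‖ = p^n. Then ∫_{‖x‖ = p^n} log‖x - a‖ dμ(x) = [(1 - 1/p) · log‖a‖ - (log p)/(p - 1)] · ‖a‖. -/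
/-!
Translating by `a`, the integral becomes that of `log ‖y‖` over `{y | ‖y + a‖ = p ^ n}`, which is
the ball `‖y‖ ≤ p ^ n` with the small ball `‖y + a‖ ≤ p ^ (n - 1)` removed; on the small ball
`‖y‖ = ‖a‖` by the ultrametric inequality. A ball of radius `p ^ (m + 1)` is the disjoint union of
`p` translates of the ball of radius `p ^ m`, so the ball of radius `p ^ m` has measure `p ^ m` and
the sphere of that radius has measure `p ^ m (1 - 1/p)`. Summing over the spheres of radius
`p ^ (n - k)`, on which `log ‖y‖ = (n - k) log p`, gives an arithmetico-geometric series for the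
integral of `log ‖y‖` over the ball, and proves its integrability.
-/

open MeasureTheory Metric Function

section SphereIntegral

variable {E : Type*} [NormedAddCommGroup E] [MeasurableSpace E] [OpensMeasurableSpace E]
  (μ : Measure E)

lemma setIntegral_sphere_comp_norm (F : ℝ → ℝ) (r : ℝ) :
    ∫ x in sphere (0 : E) r, F ‖x‖ ∂μ = μ.real (sphere 0 r) * F r := by
  rw [setIntegral_congr_fun isClosed_sphere.measurableSet
    (fun x hx => by rw [mem_sphere_zero_iff_norm.mp hx]), setIntegral_const, smul_eq_mul]

lemma integrableOn_sphere_comp_norm [ProperSpace E] [IsFiniteMeasureOnCompacts μ]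
    (F : ℝ → ℝ) (r : ℝ) : IntegrableOn (fun x => F ‖x‖) (sphere (0 : E) r) μ :=
  (integrableOn_const (C := F r) (isCompact_sphere 0 r).measure_lt_top.ne).congr_fun
    (fun x hx => by rw [mem_sphere_zero_iff_norm.mp hx]) isClosed_sphere.measurableSet

end SphereIntegral

lemma hasSum_sub_mul_geometric {r : ℝ} (hr0 : 0 ≤ r) (hr1 : r < 1) (x : ℝ) :
    HasSum (fun k : ℕ => (x - k) * r ^ k) (x / (1 - r) - r / (1 - r) ^ 2) := by
  have hr : ‖r‖ < 1 := by rwa [Real.norm_of_nonneg hr0]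
  simpa only [← sub_mul, ← div_eq_mul_inv] using
    ((hasSum_geometric_of_lt_one hr0 hr1).mul_left x).sub
      (hasSum_coe_mul_geometric_of_norm_lt_one hr)

namespace Padic

variable {p : ℕ} [hp : Fact p.Prime]

lemma exists_lt_norm_sub_natCast_lt_one {y : ℚ_[p]} (hy : ‖y‖ ≤ 1) :
    ∃ j < p, ‖y - j‖ < 1 := by
  obtain ⟨j, hjp, hj⟩ := PadicInt.exists_mem_range ⟨y, hy⟩
  exact ⟨j, hjp, PadicInt.mem_nonunits.mp hj⟩

lemma norm_natCast_sub_natCast_eq_one {i j : ℕ} (hi : i < p) (hj : j < p) (hij : i ≠ j) :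
    ‖(i : ℚ_[p]) - j‖ = 1 := by
  have hndvd : ¬ (p : ℤ) ∣ (i - j : ℤ) := fun hdvd =>
    hij (by have := Int.eq_zero_of_abs_lt_dvd hdvd (by rw [abs_lt]; omega); omega)
  refine le_antisymm (by exact_mod_cast norm_int_le_one (i - j : ℤ)) (not_lt.mp ?_)
  exact_mod_cast (norm_intCast_lt_one_iff.not.mpr hndvd)

lemma closedBall_zpow_succ_eq_iUnion {c : ℚ_[p]} {m : ℤ} (hc : ‖c‖ = (p : ℝ) ^ (m + 1)) :
    closedBall (0 : ℚ_[p]) ((p : ℝ) ^ (m + 1)) = ⋃ j : Fin p, closedBall (j * c) ((p : ℝ) ^ m) := by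
  have hp0 : (0 : ℝ) < p := by exact_mod_cast hp.out.pos
  have hc0 : c ≠ 0 := norm_ne_zero_iff.mp (hc ▸ (zpow_pos hp0 _).ne')
  ext x
  simp only [Set.mem_iUnion, mem_closedBall, dist_eq_norm, sub_zero]
  constructor
  · intro hx
    obtain ⟨j, hjp, hj⟩ := exists_lt_norm_sub_natCast_lt_one (y := x / c) (by
      rw [norm_div, hc]; exact div_le_one_of_le₀ hx (by positivity))
    refine ⟨⟨j, hjp⟩, ?_⟩
    have hxj : x - j * c = (x / c - j) * c := by field_simp
    rw [← add_sub_cancel_right m 1, ← norm_lt_pow_iff_norm_le_pow_sub_one, hxj, norm_mul, hc]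
    exact mul_lt_of_lt_one_left (by positivity) hj
  · rintro ⟨j, hj⟩
    calc ‖x‖ = ‖(x - j * c) + j * c‖ := by rw [sub_add_cancel]
      _ ≤ max ‖x - j * c‖ ‖(j : ℚ_[p]) * c‖ := IsUltrametricDist.norm_add_le_max _ _
      _ ≤ (p : ℝ) ^ (m + 1) := by
        refine max_le (hj.trans
          (zpow_le_zpow_right₀ (by exact_mod_cast hp.out.one_le) (by omega))) ?_
        rw [norm_mul, hc]
        exact mul_le_of_le_one_left (by positivity) (by exact_mod_cast norm_int_le_one (j : ℤ))

lemma pairwise_disjoint_closedBall_zpow {c : ℚ_[p]} {m : ℤ} (hc : ‖c‖ = (p : ℝ) ^ (m + 1)) :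
    Pairwise (Disjoint on fun j : Fin p => closedBall ((j : ℚ_[p]) * c) ((p : ℝ) ^ m)) := by
  intro i j hij
  refine Set.disjoint_left.mpr fun x hxi hxj => ?_
  rw [mem_closedBall, dist_eq_norm] at hxi hxj
  have hdist : ‖(i : ℚ_[p]) * c - j * c‖ ≤ (p : ℝ) ^ m := by
    calc ‖(i : ℚ_[p]) * c - j * c‖ = ‖(x - j * c) + -(x - i * c)‖ := by ring_nf
      _ ≤ (p : ℝ) ^ m := (IsUltrametricDist.norm_add_le_max _ _).trans
        (max_le hxj (by rwa [norm_neg]))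
  rw [← sub_mul, norm_mul, hc, norm_natCast_sub_natCast_eq_one i.2 j.2 (Fin.val_ne_of_ne hij),
    one_mul] at hdist
  exact absurd hdist (not_le.mpr (zpow_lt_zpow_right₀ (by exact_mod_cast hp.out.one_lt) (by omega)))

lemma sphere_zpow_eq_closedBall_sdiff (m : ℤ) :
    sphere (0 : ℚ_[p]) ((p : ℝ) ^ m) =
      closedBall 0 ((p : ℝ) ^ m) \ closedBall 0 ((p : ℝ) ^ (m - 1)) := by
  ext x
  simp only [mem_sphere_zero_iff_norm, Set.mem_sdiff, mem_closedBall_zero_iff,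
    ← norm_lt_pow_iff_norm_le_pow_sub_one, eq_iff_le_not_lt]

lemma closedBall_zpow_sdiff_zero (n : ℤ) :
    closedBall (0 : ℚ_[p]) ((p : ℝ) ^ n) \ {0} = ⋃ k : ℕ, sphere 0 ((p : ℝ) ^ (n - k)) := by
  have hp1 : (1 : ℝ) < p := by exact_mod_cast hp.out.one_lt
  ext x
  simp only [Set.mem_sdiff, mem_closedBall_zero_iff, Set.mem_singleton_iff, Set.mem_iUnion,
    mem_sphere_zero_iff_norm]
  constructor
  · rintro ⟨hxn, hx0⟩
    rw [norm_eq_zpow_neg_valuation hx0] at hxn ⊢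
    have := (zpow_le_zpow_iff_right₀ hp1).mp hxn
    exact ⟨(n + x.valuation).toNat, by congr 1; omega⟩
  · rintro ⟨k, hk⟩
    refine ⟨hk ▸ zpow_le_zpow_right₀ hp1.le (by omega), fun hx0 => ?_⟩
    rw [hx0, norm_zero] at hk
    exact (zpow_pos (zero_lt_one.trans hp1) _).ne hk

lemma pairwise_disjoint_sphere_zpow_sub (n : ℤ) :
    Pairwise (Disjoint on fun k : ℕ => sphere (0 : ℚ_[p]) ((p : ℝ) ^ (n - k))) := by
  have hp1 : (1 : ℝ) < p := by exact_mod_cast hp.out.one_lt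
  intro k l hkl
  refine Set.disjoint_left.mpr fun x hxk hxl => hkl ?_
  rw [mem_sphere_zero_iff_norm] at hxk hxl
  have := zpow_right_injective₀ (zero_lt_one.trans hp1) hp1.ne' (hxk.symm.trans hxl)
  omega

section Measure

variable [MeasurableSpace ℚ_[p]] [BorelSpace ℚ_[p]] (μ : Measure ℚ_[p]) [μ.IsAddHaarMeasure]

lemma measure_closedBall_zpow_succ (m : ℤ) :
    μ (closedBall 0 ((p : ℝ) ^ (m + 1))) = p * μ (closedBall 0 ((p : ℝ) ^ m)) := by
  have hc : ‖(p : ℚ_[p]) ^ (-(m + 1))‖ = (p : ℝ) ^ (m + 1) := by rw [norm_p_zpow, neg_neg]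
  rw [closedBall_zpow_succ_eq_iUnion hc, measure_iUnion (pairwise_disjoint_closedBall_zpow hc)
    fun _ => measurableSet_closedBall, tsum_fintype]
  simp [Measure.addHaar_closedBall_center]

lemma measureReal_closedBall_zpow (hμ : μ (closedBall 0 1) = 1) (c : ℚ_[p]) (m : ℤ) :
    μ.real (closedBall c ((p : ℝ) ^ m)) = (p : ℝ) ^ m := by
  rw [measureReal_def, Measure.addHaar_closedBall_center, ← measureReal_def]
  have hp0 : (p : ℝ) ≠ 0 := by exact_mod_cast hp.out.ne_zero
  have hsucc (k : ℤ) : μ.real (closedBall 0 ((p : ℝ) ^ (k + 1))) =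
      p * μ.real (closedBall 0 ((p : ℝ) ^ k)) := by
    simp [measureReal_def, measure_closedBall_zpow_succ, ENNReal.toReal_mul]
  induction m using Int.induction_on with
  | zero => simp [measureReal_def, hμ]
  | succ k ih => rw [hsucc, ih, zpow_add_one₀ hp0, mul_comm]
  | pred k ih =>
    rw [← sub_add_cancel (-(k : ℤ)) 1, hsucc] at ih
    rw [zpow_add_one₀ hp0, mul_comm _ (p : ℝ)] at ih
    exact mul_left_cancel₀ hp0 ih

lemma measureReal_sphere_zpow (hμ : μ (closedBall 0 1) = 1) (m : ℤ) :
    μ.real (sphere (0 : ℚ_[p]) ((p : ℝ) ^ m)) = (p : ℝ) ^ m * (1 - (p : ℝ)⁻¹) := by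
  have hp0 : (p : ℝ) ≠ 0 := by exact_mod_cast hp.out.ne_zero
  have hsub : closedBall (0 : ℚ_[p]) ((p : ℝ) ^ (m - 1)) ⊆ closedBall 0 ((p : ℝ) ^ m) :=
    closedBall_subset_closedBall
      (zpow_le_zpow_right₀ (by exact_mod_cast hp.out.one_le) (by omega))
  rw [sphere_zpow_eq_closedBall_sdiff, measureReal_sdiff hsub measurableSet_closedBall
      (isCompact_closedBall 0 _).measure_lt_top.ne,
    measureReal_closedBall_zpow μ hμ, measureReal_closedBall_zpow μ hμ, zpow_sub_one₀ hp0]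
  ring

lemma closedBall_zpow_ae_eq_iUnion_sphere (n : ℤ) :
    closedBall (0 : ℚ_[p]) ((p : ℝ) ^ n) =ᵐ[μ] ⋃ k : ℕ, sphere 0 ((p : ℝ) ^ (n - k)) := by
  rw [← closedBall_zpow_sdiff_zero]
  exact (sdiff_null_ae_eq_self (measure_singleton 0)).symm

lemma hasSum_integral_log_norm_sphere_zpow_sub (hμ : μ (closedBall 0 1) = 1) (n : ℤ) :
    HasSum (fun k : ℕ => ∫ x in sphere (0 : ℚ_[p]) ((p : ℝ) ^ (n - k)), Real.log ‖x‖ ∂μ)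
      ((p : ℝ) ^ n * (n * Real.log p - Real.log p / (p - 1))) := by
  have hp1 : (1 : ℝ) < p := by exact_mod_cast hp.out.one_lt
  have hp0 : (p : ℝ) ≠ 0 := (zero_lt_one.trans hp1).ne'
  have hterm (k : ℕ) : ∫ x in sphere (0 : ℚ_[p]) ((p : ℝ) ^ (n - k)), Real.log ‖x‖ ∂μ =
      ((p : ℝ) ^ n * (1 - (p : ℝ)⁻¹) * Real.log p) * ((n - k) * (p : ℝ)⁻¹ ^ k) := by
    rw [setIntegral_sphere_comp_norm μ Real.log, measureReal_sphere_zpow μ hμ, Real.log_zpow,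
      zpow_sub₀ hp0, zpow_natCast]
    push_cast
    rw [inv_pow]
    field_simp
  have hsum := (hasSum_sub_mul_geometric (inv_nonneg.2 (zero_lt_one.trans hp1).le)
    (inv_lt_one_of_one_lt₀ hp1) n).mul_left ((p : ℝ) ^ n * (1 - (p : ℝ)⁻¹) * Real.log p)
  have hp1' : (p : ℝ) - 1 ≠ 0 := (sub_pos.2 hp1).ne'
  have hval : (p : ℝ) ^ n * (1 - (p : ℝ)⁻¹) * Real.log p *
      (n / (1 - (p : ℝ)⁻¹) - (p : ℝ)⁻¹ / (1 - (p : ℝ)⁻¹) ^ 2) =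
      (p : ℝ) ^ n * (n * Real.log p - Real.log p / (p - 1)) := by
    field_simp
  simpa only [hterm, hval] using hsum

lemma integrableOn_log_norm_closedBall_zpow (hμ : μ (closedBall 0 1) = 1) (n : ℤ) :
    IntegrableOn (fun x : ℚ_[p] => Real.log ‖x‖) (closedBall 0 ((p : ℝ) ^ n)) μ := by
  refine IntegrableOn.congr_set_ae ?_ (closedBall_zpow_ae_eq_iUnion_sphere μ n)
  refine integrableOn_iUnion_of_summable_integral_norm
    (fun k => integrableOn_sphere_comp_norm μ Real.log _) ?_
  have habs (k : ℕ) : ∫ x in sphere (0 : ℚ_[p]) ((p : ℝ) ^ (n - k)), ‖Real.log ‖x‖‖ ∂μ =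
      |∫ x in sphere (0 : ℚ_[p]) ((p : ℝ) ^ (n - k)), Real.log ‖x‖ ∂μ| := by
    rw [setIntegral_sphere_comp_norm μ (‖Real.log ·‖), setIntegral_sphere_comp_norm μ Real.log,
      abs_mul, abs_of_nonneg measureReal_nonneg, Real.norm_eq_abs]
  simp_rw [habs]
  exact (hasSum_integral_log_norm_sphere_zpow_sub μ hμ n).summable.abs

lemma integral_log_norm_closedBall_zpow (hμ : μ (closedBall 0 1) = 1) (n : ℤ) :
    ∫ x in closedBall (0 : ℚ_[p]) ((p : ℝ) ^ n), Real.log ‖x‖ ∂μ =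
      (p : ℝ) ^ n * (n * Real.log p - Real.log p / (p - 1)) := by
  have hae := closedBall_zpow_ae_eq_iUnion_sphere μ n
  rw [setIntegral_congr_set hae]
  exact (hasSum_integral_iUnion (fun _ => isClosed_sphere.measurableSet)
    (pairwise_disjoint_sphere_zpow_sub n)
    ((integrableOn_log_norm_closedBall_zpow μ hμ n).congr_set_ae hae.symm)).unique
    (hasSum_integral_log_norm_sphere_zpow_sub μ hμ n)

end Measure

lemma setOf_norm_add_eq_zpow {a : ℚ_[p]} {n : ℤ} (ha : ‖a‖ = (p : ℝ) ^ n) :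
    {y : ℚ_[p] | ‖y + a‖ = (p : ℝ) ^ n} =
      closedBall 0 ((p : ℝ) ^ n) \ closedBall (-a) ((p : ℝ) ^ (n - 1)) := by
  ext y
  simp only [Set.mem_ofPred_eq, Set.mem_sdiff, mem_closedBall, dist_eq_norm, sub_zero,
    sub_neg_eq_add, ← norm_lt_pow_iff_norm_le_pow_sub_one, not_lt]
  constructor
  · intro hy
    refine ⟨?_, hy.ge⟩
    calc ‖y‖ = ‖(y + a) + -a‖ := by rw [add_neg_cancel_right]
      _ ≤ max ‖y + a‖ ‖-a‖ := IsUltrametricDist.norm_add_le_max _ _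
      _ = (p : ℝ) ^ n := by rw [norm_neg, hy, ha, max_self]
  · rintro ⟨hy, hya⟩
    exact le_antisymm ((IsUltrametricDist.norm_add_le_max _ _).trans (max_le hy ha.le)) hya

lemma norm_eq_of_mem_closedBall_neg {a y : ℚ_[p]} {n : ℤ} (ha : ‖a‖ = (p : ℝ) ^ n)
    (hy : y ∈ closedBall (-a) ((p : ℝ) ^ (n - 1))) : ‖y‖ = ‖a‖ := by
  rw [mem_closedBall, dist_eq_norm, sub_neg_eq_add, ← norm_lt_pow_iff_norm_le_pow_sub_one,
    ← ha] at hy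
  exact IsUltrametricDist.norm_eq_of_add_norm_lt_max (hy.trans_le (le_max_right _ _))

end Padic

theorem padic_integral_log_sphere
    (p : ℕ) [Fact p.Prime]
    [MeasurableSpace ℚ_[p]] [BorelSpace ℚ_[p]]
    (μ : Measure ℚ_[p]) [μ.IsAddHaarMeasure]
    (hμ : μ {x : ℚ_[p] | ‖x‖ ≤ 1} = 1)
    (n : ℤ) (a : ℚ_[p]) (ha : ‖a‖ = (p : ℝ) ^ n) :
    ∫ x in {x : ℚ_[p] | ‖x‖ = (p : ℝ) ^ n}, Real.log ‖x - a‖ ∂μ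
      = ((1 - 1 / (p : ℝ)) * Real.log ‖a‖ - Real.log p / ((p : ℝ) - 1)) * ‖a‖ := by
  have hμ' : μ (closedBall 0 1) = 1 := by
    rwa [show closedBall (0 : ℚ_[p]) 1 = {x | ‖x‖ ≤ 1} by ext; simp]
  have hshift := (measurePreserving_add_right μ a).setIntegral_preimage_emb
    (MeasurableEquiv.addRight a).measurableEmbedding (fun x => Real.log ‖x - a‖)
    {x : ℚ_[p] | ‖x‖ = (p : ℝ) ^ n}
  simp only [add_sub_cancel_right, Set.preimage_ofPred_eq] at hshift
  have hlog : Set.EqOn (fun y => Real.log ‖y‖) (fun _ => Real.log ‖a‖)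
      (closedBall (-a) ((p : ℝ) ^ (n - 1))) := fun y hy =>
    congrArg Real.log (Padic.norm_eq_of_mem_closedBall_neg ha hy)
  have hsub : closedBall (-a) ((p : ℝ) ^ (n - 1)) ⊆ closedBall 0 ((p : ℝ) ^ n) := fun y hy => by
    rw [mem_closedBall_zero_iff, Padic.norm_eq_of_mem_closedBall_neg ha hy, ha]
  have hp0 : (p : ℝ) ≠ 0 := by exact_mod_cast (Fact.out : p.Prime).ne_zero
  have hp1 : (p : ℝ) - 1 ≠ 0 := sub_ne_zero.2 (by exact_mod_cast (Fact.out : p.Prime).one_lt.ne')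
  rw [← hshift, Padic.setOf_norm_add_eq_zpow ha, setIntegral_sdiff measurableSet_closedBall
      (Padic.integrableOn_log_norm_closedBall_zpow μ hμ' n) hsub,
    Padic.integral_log_norm_closedBall_zpow μ hμ' n,
    setIntegral_congr_fun measurableSet_closedBall hlog,
    setIntegral_const, Padic.measureReal_closedBall_zpow μ hμ', smul_eq_mul, ha, Real.log_zpow,
    zpow_sub_one₀ hp0]
  field_simp
  ring
end
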